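/- arXiv:2001.02776 — 3 statements merged into one kernel-verified Lean document; each statement's English description precedes it below -/
import Mathlib

section
/- In a free group, the only element conjugate to its own inverse is the identity. That is, if F is a free group and g, h ∈ F with h·g·h⁻¹ = g⁻¹, then g = 1. -/
theorem eq_one_of_conj_eq_inv {G : Type*} [Group G] [IsMulTorsionFree G] {g h : G}
    (hconj : h * g * h⁻¹ = g⁻¹) : g = 1 := by
  have hswap : h * g = g⁻¹ * h := mul_inv_eq_iff_eq_mul.1 hconj
  have hsq : (h * g) ^ 2 = h ^ 2 :=
    calc (h * g) ^ 2 = h * g * (g⁻¹ * h) := by rw [sq, ← hswap]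
      _ = h ^ 2 := by rw [sq, ← mul_assoc, mul_inv_cancel_right]
  exact mul_eq_left.1 (pow_left_injective two_ne_zero hsq)

/-- In a free group, the only element conjugate to its own inverse is the identity. -/
theorem freeGroup_conj_inv_eq_one {α : Type*} (g h : FreeGroup α)
    (hconj : h * g * h⁻¹ = g⁻¹) : g = 1 :=
  eq_one_of_conj_eq_inv hconj
end

section
/- Every nontrivial element of a free group is contained in a unique maximal infinite cyclic subgroup. -/
/-!
The centralizer `C` of `g ≠ 1` is itself the maximal cyclic subgroup: every cyclic subgroup
containing `g` is abelian, hence lies in `C`, so it suffices that `C` is cyclic. By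
Nielsen–Schreier `C` is free, and `g` is a nontrivial central element of it. In a free group a
central `z ≠ 1` generates, together with any basis element `a`, an abelian and hence cyclic
subgroup, so `z` and `a` have nontrivial common powers; two basis elements `a ≠ b` would then have
nontrivial common powers, which the exponent sum in `a` rules out. So `C` has rank at most one.
-/

open Subgroup

namespace IsFreeGroup

variable {G : Type*} [Group G] [IsFreeGroup G]

noncomputable def exponentSum [DecidableEq (Generators G)] (a : Generators G) :
    G →* Multiplicative ℤ :=
  lift fun s => if s = a then Multiplicative.ofAdd 1 else 1

theorem exponentSum_of_self [DecidableEq (Generators G)] (a : Generators G) :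
    exponentSum a (of a) = Multiplicative.ofAdd 1 := by
  simp [exponentSum, lift_of]

theorem exponentSum_of_of_ne [DecidableEq (Generators G)] {a b : Generators G} (h : b ≠ a) :
    exponentSum a (of b) = 1 := by
  simp [exponentSum, lift_of, h]

theorem of_ne_one (a : Generators G) : of a ≠ 1 := by
  classical
  exact ne_of_apply_ne (exponentSum a) (by simp [exponentSum_of_self])

theorem isCyclic_of_subsingleton_generators [Subsingleton (Generators G)] : IsCyclic G := by
  rcases isEmpty_or_nonempty (Generators G) with _ | ⟨⟨a⟩⟩
  · exact isCyclic_of_surjective (toFreeGroup G).symm (toFreeGroup G).symm.surjective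
  · have : Unique (Generators G) := uniqueOfSubsingleton a
    exact isCyclic_of_surjective (toFreeGroup G).symm (toFreeGroup G).symm.surjective

-- Two distinct generators map onto the noncommuting transpositions `(0 1)` and `(1 2)`.
theorem subsingleton_generators_of_isMulCommutative [IsMulCommutative G] :
    Subsingleton (Generators G) := by
  classical
  refine ⟨fun a b => by_contra fun hab => ?_⟩
  let φ : G →* Equiv.Perm (Fin 3) :=
    lift fun s => if s = a then Equiv.swap 0 1 else if s = b then Equiv.swap 1 2 else 1
  have h := congrArg φ (mul_comm' (of a) (of b))
  simp only [map_mul, φ, lift_of, if_true, if_neg hab, if_neg (Ne.symm hab)] at h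
  exact absurd h (by decide)

theorem isCyclic_of_isMulCommutative [IsMulCommutative G] : IsCyclic G :=
  have := subsingleton_generators_of_isMulCommutative (G := G)
  isCyclic_of_subsingleton_generators

theorem exists_zpow_eq_zpow_of_commute {z x : G} (hz : z ≠ 1) (hx : x ≠ 1) (h : Commute z x) :
    ∃ k m : ℤ, k ≠ 0 ∧ m ≠ 0 ∧ z ^ k = x ^ m := by
  let H := closure ({z, x} : Set G)
  have : IsMulCommutative H := isMulCommutative_closure (by
    simp only [Set.mem_insert_iff, Set.mem_singleton_iff]
    rintro _ (rfl | rfl) _ (rfl | rfl) <;> first | rfl | exact h | exact h.symm)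
  obtain ⟨c, hc⟩ := H.isCyclic_iff_exists_zpowers_eq_top.mp isCyclic_of_isMulCommutative
  obtain ⟨m, rfl⟩ := mem_zpowers_iff.mp (hc ▸ subset_closure (by simp) : z ∈ zpowers c)
  obtain ⟨k, rfl⟩ := mem_zpowers_iff.mp (hc ▸ subset_closure (by simp) : x ∈ zpowers c)
  refine ⟨k, m, ?_, ?_, ?_⟩
  · rintro rfl; exact hx (zpow_zero c)
  · rintro rfl; exact hz (zpow_zero c)
  · rw [← zpow_mul, ← zpow_mul, mul_comm]

theorem subsingleton_generators_of_mem_center {z : G} (hz : z ∈ center G) (hz1 : z ≠ 1) :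
    Subsingleton (Generators G) := by
  classical
  refine ⟨fun a b => by_contra fun hab => ?_⟩
  have common_power (s : Generators G) : ∃ k m : ℤ, k ≠ 0 ∧ m ≠ 0 ∧ z ^ k = of s ^ m :=
    exists_zpow_eq_zpow_of_commute hz1 (of_ne_one s) (mem_center_iff.mp hz (of s)).symm
  obtain ⟨k, m, -, hm, hzk⟩ := common_power a
  obtain ⟨l, n, hl, -, hzl⟩ := common_power b
  have h : of a ^ (m * l) = of b ^ (n * k) := by
    rw [zpow_mul, ← hzk, ← zpow_mul, mul_comm k, zpow_mul, hzl, ← zpow_mul]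
  have h' := congrArg (exponentSum a) h
  rw [map_zpow, map_zpow, exponentSum_of_self, exponentSum_of_of_ne (Ne.symm hab), one_zpow,
    ← ofAdd_zsmul, smul_eq_mul, mul_one] at h'
  exact mul_ne_zero hm hl (Multiplicative.ofAdd.injective h')

theorem isCyclic_centralizer {g : G} (hg : g ≠ 1) : IsCyclic (centralizer {g}) := by
  let g' : centralizer {g} := ⟨g, mem_centralizer_singleton_iff.mpr rfl⟩
  have hg' : g' ∈ center (centralizer {g}) :=
    mem_center_iff.mpr fun h => Subtype.ext (mem_centralizer_singleton_iff.mp h.2)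
  have := subsingleton_generators_of_mem_center hg' (fun h => hg (congrArg Subtype.val h))
  exact isCyclic_of_subsingleton_generators

end IsFreeGroup

theorem Subgroup.zpowers_le_centralizer_of_mem {G : Type*} [Group G] {g y : G}
    (h : g ∈ zpowers y) : zpowers y ≤ centralizer {g} := by
  obtain ⟨n, rfl⟩ := mem_zpowers_iff.mp h
  exact zpowers_le.mpr (mem_centralizer_singleton_iff.mpr (Commute.self_zpow y n).eq)

/-- Every nontrivial element of a free group is contained in a unique maximal
infinite cyclic subgroup. -/
theorem freeGroup_unique_maximal_infinite_cyclic {α : Type*} (g : FreeGroup α)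
    (hg : g ≠ 1) :
    ∃! Z : Subgroup (FreeGroup α),
      g ∈ Z ∧ (∃ x : FreeGroup α, Z = Subgroup.zpowers x) ∧
      (Z : Set (FreeGroup α)).Infinite ∧
      ∀ W : Subgroup (FreeGroup α), (∃ y : FreeGroup α, W = Subgroup.zpowers y) →
        Z ≤ W → Z = W := by
  obtain ⟨t, ht⟩ := (centralizer {g}).isCyclic_iff_exists_zpowers_eq_top.mp
    (IsFreeGroup.isCyclic_centralizer hg)
  have hgC : g ∈ centralizer {g} := mem_centralizer_singleton_iff.mpr rfl
  have le_centralizer {Z : Subgroup (FreeGroup α)} (hZ : ∃ x, Z = zpowers x) (hgZ : g ∈ Z) :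
      Z ≤ centralizer {g} := by
    obtain ⟨x, rfl⟩ := hZ
    exact zpowers_le_centralizer_of_mem hgZ
  refine ⟨centralizer {g}, ⟨hgC, ⟨t, ht.symm⟩, ?_, ?_⟩, ?_⟩
  · refine Set.Infinite.mono (zpowers_le.mpr hgC) (infinite_zpowers.mpr ?_)
    rwa [isOfFinOrder_iff_eq_one]
  · rintro W hW hCW
    exact le_antisymm hCW (le_centralizer hW (hCW hgC))
  · rintro Z ⟨hgZ, hZ, -, hZmax⟩
    exact hZmax _ ⟨t, ht.symm⟩ (le_centralizer hZ hgZ)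
end

section
/- If a group G acts on a path-connected topological space X with an open fundamental domain U (meaning U·G = X and the set S = {g ∈ G : (U·g) ∩ U ≠ ∅} is finite), then G is finitely generated; in fact S is a symmetric generating set for G. -/
open Pointwise

/-- If a group acts by homeomorphisms on a path-connected space with an open
fundamental domain `U`, then the finite set `S = {g | gU ∩ U ≠ ∅}` is a symmetric
generating set for the group; in particular the group is finitely generated. -/
theorem fg_of_open_fundamental_domain {G X : Type*} [Group G] [TopologicalSpace X]
    [PathConnectedSpace X] [MulAction G X]
    (hcont : ∀ g : G, Continuous fun x : X => g • x)
    (U : Set X) (hUopen : IsOpen U) (hcover : (⋃ g : G, g • U) = Set.univ)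
    (S : Set G) (hSdef : S = {g : G | (g • U) ∩ U ≠ ∅}) (hSfin : S.Finite) :
    S⁻¹ = S ∧ Subgroup.closure S = ⊤ := by
  -- membership criterion for S
  have hSmem : ∀ g : G, g ∈ S ↔ ∃ x, x ∈ U ∧ g • x ∈ U := by
    intro g
    rw [hSdef]
    simp only [Set.mem_setOf_eq, ← Set.nonempty_iff_ne_empty]
    constructor
    · rintro ⟨y, hy1, hy2⟩
      obtain ⟨x, hx, rfl⟩ := hy1
      exact ⟨x, hx, hy2⟩
    · rintro ⟨x, hx1, hx2⟩
      exact ⟨g • x, ⟨x, hx1, rfl⟩, hx2⟩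
  -- symmetry
  have hsymm : S⁻¹ = S := by
    have key : ∀ g : G, g ∈ S → g⁻¹ ∈ S := by
      intro g hg
      obtain ⟨x, hx1, hx2⟩ := (hSmem g).1 hg
      exact (hSmem g⁻¹).2 ⟨g • x, hx2, by simp [hx1]⟩
    ext g
    constructor
    · intro hg
      have := key g⁻¹ (by simpa using hg)
      simpa using this
    · intro hg
      exact Set.mem_inv.2 (by simpa using key g hg)
  refine ⟨hsymm, ?_⟩
  -- smul sets are open
  have hopen : ∀ g : G, IsOpen (g • U) := by
    intro g
    have : g • U = (fun x : X => g⁻¹ • x) ⁻¹' U := by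
      ext x
      simp [Set.mem_smul_set_iff_inv_smul_mem]
    rw [this]
    exact hUopen.preimage (hcont g⁻¹)
  have hXne : Nonempty X := PathConnectedSpace.nonempty
  -- U nonempty
  have hUne : U.Nonempty := by
    by_contra h
    rw [Set.not_nonempty_iff_eq_empty] at h
    have := hcover
    simp [h] at this
    exact (Set.univ_nonempty (α := X)).ne_empty this.symm
  set H := Subgroup.closure S with hH
  set V : Set X := ⋃ g ∈ (H : Set G), g • U with hV
  set W : Set X := ⋃ g ∈ ((H : Set G)ᶜ), g • U with hW
  have hVopen : IsOpen V := isOpen_biUnion fun g _ => hopen g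
  have hWopen : IsOpen W := isOpen_biUnion fun g _ => hopen g
  have hunion : V ∪ W = Set.univ := by
    rw [← hcover]
    ext x
    simp only [hV, hW, Set.mem_union, Set.mem_iUnion, Set.mem_compl_iff]
    constructor
    · rintro (⟨g, _, hx⟩ | ⟨g, _, hx⟩) <;> exact ⟨g, hx⟩
    · rintro ⟨g, hx⟩
      by_cases hg : g ∈ (H : Set G)
      · exact Or.inl ⟨g, hg, hx⟩
      · exact Or.inr ⟨g, hg, hx⟩
  have hdisj : V ∩ W = ∅ := by
    rw [Set.eq_empty_iff_forall_notMem]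
    rintro x ⟨hxV, hxW⟩
    simp only [hV, hW, Set.mem_iUnion, Set.mem_compl_iff] at hxV hxW
    obtain ⟨g, hgH, hxg⟩ := hxV
    obtain ⟨k, hkH, hxk⟩ := hxW
    apply hkH
    -- g⁻¹ * k ∈ S
    have hmem : g⁻¹ * k ∈ S := by
      obtain ⟨y, hy, hyx⟩ := hxk
      apply (hSmem _).2
      refine ⟨y, hy, ?_⟩
      obtain ⟨z, hz, hzx⟩ := hxg
      have hyx' : k • y = x := hyx
      have hzx' : g • z = x := hzx
      have : (g⁻¹ * k) • y = g⁻¹ • x := by rw [mul_smul, hyx']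
      rw [this, ← hzx']
      simpa using hz
    have : g * (g⁻¹ * k) ∈ H := mul_mem hgH (Subgroup.subset_closure hmem)
    simpa using this
  -- V is clopen and nonempty, hence univ
  have hVclosed : IsClosed V := by
    have : V = Wᶜ := by
      ext x
      constructor
      · intro hxV hxW
        exact Set.eq_empty_iff_forall_notMem.1 hdisj x ⟨hxV, hxW⟩
      · intro hxW
        have hxU : x ∈ Set.univ := Set.mem_univ x
        rw [← hunion] at hxU
        rcases hxU with h | h
        · exact h
        · exact absurd h hxW
    rw [this]
    exact hWopen.isClosed_compl
  have hVne : V.Nonempty := by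
    obtain ⟨x, hx⟩ := hUne
    exact ⟨x, Set.mem_biUnion (one_mem H) (by simpa using hx)⟩
  have hVuniv : V = Set.univ := IsClopen.eq_univ ⟨hVclosed, hVopen⟩ hVne
  -- conclude
  rw [eq_top_iff]
  intro g _
  obtain ⟨x, hx⟩ := hUne
  have hgx : g • x ∈ V := hVuniv ▸ Set.mem_univ _
  simp only [hV, Set.mem_iUnion] at hgx
  obtain ⟨k, hkH, y, hy, hyx⟩ := hgx
  have hmem : k⁻¹ * g ∈ S := by
    apply (hSmem _).2
    refine ⟨x, hx, ?_⟩
    have hyx' : k • y = g • x := hyx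
    rw [mul_smul, ← hyx']
    simpa using hy
  have : k * (k⁻¹ * g) ∈ H := mul_mem hkH (Subgroup.subset_closure hmem)
  simpa using this
end
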